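/- Let d be an odd prime, s,t ∈ ℤ_d nontrivial with s²+t² ≡ 1 mod d and s² ≢ t² mod d. With environment state |σ⟩_B = (|0⟩+|1⟩)/√2 and input ρ_A = ½(|0⟩⟨0| + |t^{-1}s⟩⟨t^{-1}s|), the channel output is Λ_{s,σ}(ρ_A) = ¼(|0⟩⟨0| + |t⟩⟨t| + |t^{-1}s²⟩⟨t^{-1}s²| + |t^{-1}⟩⟨t^{-1}|) and the complementary output is Λ^c_{s,σ}(ρ_A) = ½|0⟩⟨0| + ¼|−s⟩⟨−s| + ¼|s⟩⟨s|. -/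

import Mathlib

open Matrix Kronecker BigOperators
open scoped ComplexOrder

noncomputable def bs (d : ℕ) (s t : ZMod d) :
    Matrix (ZMod d × ZMod d) (ZMod d × ZMod d) ℂ :=
  Matrix.of fun a b => if a.1 = s * b.1 + t * b.2 ∧ a.2 = - t * b.1 + s * b.2 then 1 else 0

noncomputable def ptrB {α β : Type*} [Fintype β] (M : Matrix (α × β) (α × β) ℂ) :
    Matrix α α ℂ := Matrix.of fun i j => ∑ b, M (i, b) (j, b)

noncomputable def ptrA {α β : Type*} [Fintype α] (M : Matrix (α × β) (α × β) ℂ) :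
    Matrix β β ℂ := Matrix.of fun i j => ∑ a, M (a, i) (a, j)

noncomputable def chan (d : ℕ) [NeZero d] (s t : ZMod d)
    (σ ρ : Matrix (ZMod d) (ZMod d) ℂ) : Matrix (ZMod d) (ZMod d) ℂ :=
  ptrB (bs d s t * (ρ ⊗ₖ σ) * (bs d s t)ᴴ)

noncomputable def chanC (d : ℕ) [NeZero d] (s t : ZMod d)
    (σ ρ : Matrix (ZMod d) (ZMod d) ℂ) : Matrix (ZMod d) (ZMod d) ℂ :=
  ptrA (bs d s t * (ρ ⊗ₖ σ) * (bs d s t)ᴴ)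

noncomputable def ketbra (d : ℕ) [NeZero d] (k : ZMod d) : Matrix (ZMod d) (ZMod d) ℂ :=
  Matrix.single k k (1 : ℂ)

noncomputable def sigmaVec (d : ℕ) : ZMod d → ℂ :=
  fun j => if j = 0 ∨ j = 1 then ((1 / Real.sqrt 2 : ℝ) : ℂ) else 0

noncomputable def sigma01 (d : ℕ) : Matrix (ZMod d) (ZMod d) ℂ :=
  Matrix.vecMulVec (sigmaVec d) (star (sigmaVec d))

noncomputable def rhoIn (d : ℕ) [NeZero d] (s t : ZMod d) : Matrix (ZMod d) (ZMod d) ℂ :=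
  (1 / 2 : ℂ) • (ketbra d 0 + ketbra d (t⁻¹ * s))


lemma bs_apply' {d : ℕ} (s t : ZMod d) (hst : s^2 + t^2 = 1) (a x : ZMod d × ZMod d) :
    bs d s t a x = if x = (s * a.1 - t * a.2, t * a.1 + s * a.2) then 1 else 0 := by
  unfold bs
  simp only [Matrix.of_apply]
  refine if_congr ?_ rfl rfl
  constructor
  · rintro ⟨h1, h2⟩
    refine Prod.ext ?_ ?_
    · show x.1 = s * a.1 - t * a.2
      linear_combination -s * h1 + t * h2 - x.1 * hst
    · show x.2 = t * a.1 + s * a.2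
      linear_combination -t * h1 - s * h2 - x.2 * hst
  · rintro rfl
    constructor
    · show a.1 = s * (s * a.1 - t * a.2) + t * (t * a.1 + s * a.2)
      linear_combination -a.1 * hst
    · show a.2 = -t * (s * a.1 - t * a.2) + s * (t * a.1 + s * a.2)
      linear_combination -a.2 * hst

lemma conj_apply' {d : ℕ} [NeZero d] (s t : ZMod d) (hst : s^2 + t^2 = 1)
    (M : Matrix (ZMod d × ZMod d) (ZMod d × ZMod d) ℂ) (a c : ZMod d × ZMod d) :
    (bs d s t * M * (bs d s t)ᴴ) a c
      = M (s * a.1 - t * a.2, t * a.1 + s * a.2) (s * c.1 - t * c.2, t * c.1 + s * c.2) := by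
  simp only [Matrix.mul_apply, Matrix.conjTranspose_apply, bs_apply' s t hst,
    apply_ite (star : ℂ → ℂ), star_one, star_zero, ite_mul, mul_ite, one_mul, mul_one,
    zero_mul, mul_zero, Finset.sum_ite_eq', Finset.mem_univ, if_true]

lemma sigma01_diag {d : ℕ} (x : ZMod d) :
    sigma01 d x x = if x = 0 ∨ x = 1 then (1/2 : ℂ) else 0 := by
  simp only [sigma01, sigmaVec, Matrix.vecMulVec_apply, Pi.star_apply]
  split_ifs
  · rw [Complex.star_def, Complex.conj_ofReal, ← Complex.ofReal_mul]
    have h2 : (1/Real.sqrt 2) * (1/Real.sqrt 2) = 1/2 := by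
      rw [div_mul_div_comm, one_mul, Real.mul_self_sqrt (by norm_num)]
    rw [h2]
    norm_num
  · simp

lemma dup_ite (P : Prop) [Decidable P] (a : ℂ) :
    (if P then if P then a else 0 else 0) = if P then a else 0 := by
  split <;> simp

theorem stmt14 (d : ℕ) [NeZero d] (hd : d.Prime) (hodd : Odd d) (s t : ZMod d)
    (hs0 : s ^ 2 ≠ 0) (hs1 : s ^ 2 ≠ 1) (ht0 : t ^ 2 ≠ 0) (ht1 : t ^ 2 ≠ 1)
    (hst : s ^ 2 + t ^ 2 = 1) (hne : s ^ 2 ≠ t ^ 2) :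
    chan d s t (sigma01 d) (rhoIn d s t)
        = (1 / 4 : ℂ) • (ketbra d 0 + ketbra d t + ketbra d (t⁻¹ * s ^ 2) + ketbra d t⁻¹) ∧
    chanC d s t (sigma01 d) (rhoIn d s t)
        = (1 / 2 : ℂ) • ketbra d 0 + (1 / 4 : ℂ) • ketbra d (-s)
            + (1 / 4 : ℂ) • ketbra d s := by
  haveI := Fact.mk hd
  have hs : s ≠ 0 := fun h => hs0 (by simp [h])
  have ht : t ≠ 0 := fun h => ht0 (by simp [h])
  have hti : t⁻¹ ≠ 0 := inv_ne_zero ht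
  have hsi : s⁻¹ ≠ 0 := inv_ne_zero hs
  have h2 : (2 : ZMod d) ≠ 0 := by
    intro h
    have hdvd : d ∣ 2 := (CharP.cast_eq_zero_iff (ZMod d) d 2).mp (by exact_mod_cast h)
    have hd2 : d = 2 := (Nat.prime_dvd_prime_iff_eq hd Nat.prime_two).mp hdvd
    rw [hd2] at hodd
    exact (by decide : ¬ Odd 2) hodd
  constructor
  · ext i j
    simp only [chan, ptrB, Matrix.of_apply, conj_apply' s t hst, Matrix.kroneckerMap_apply,
      rhoIn, ketbra, Matrix.smul_apply,
      Matrix.add_apply, Matrix.single, Matrix.of_apply, smul_eq_mul]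
    have key : ∀ c u x : ZMod d, (c = s*u - t*x) ↔ (x = t⁻¹*(s*u - c)) := by
      intro c u x
      rw [eq_inv_mul_iff_mul_eq₀ ht]
      constructor
      · intro h; linear_combination h
      · intro h; linear_combination h
    simp only [key, ite_and, mul_ite, ite_mul, zero_mul, mul_zero, one_mul, mul_one, mul_add,
      add_mul, Finset.sum_add_distrib, Finset.sum_ite_eq', Finset.mem_univ, if_true]
    have hcan : ∀ c : ZMod d, t⁻¹ * (s * i - c) = t⁻¹ * (s * j - c) ↔ i = j := by
      intro c
      constructor
      · intro h
        have h2 := mul_left_cancel₀ hti h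
        have h3 : s * i = s * j := by linear_combination h2
        exact mul_left_cancel₀ hs h3
      · rintro rfl; rfl
    by_cases hij : i = j
    · subst hij
      simp only [hcan, if_pos rfl]
      have a1 : t * i + s * (t⁻¹ * (s * i - 0)) = t⁻¹ * i := by
        field_simp
        linear_combination i * hst
      have a2 : t * i + s * (t⁻¹ * (s * i - t⁻¹ * s)) = t⁻¹ * (i - t⁻¹ * s ^ 2) := by
        field_simp
        linear_combination i * t * hst
      rw [a1, a2, sigma01_diag, sigma01_diag]
      have c1 : t⁻¹ * i = 0 ↔ 0 = i := by
        constructor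
        · intro h
          rcases mul_eq_zero.mp h with h' | h'
          · exact absurd h' hti
          · exact h'.symm
        · rintro rfl; simp
      have c2 : t⁻¹ * i = 1 ↔ t = i := inv_mul_eq_one₀ ht
      have c3 : t⁻¹ * (i - t⁻¹ * s ^ 2) = 0 ↔ t⁻¹ * s ^ 2 = i := by
        constructor
        · intro h
          rcases mul_eq_zero.mp h with h' | h'
          · exact absurd h' hti
          · exact (sub_eq_zero.mp h').symm
        · rintro rfl; simp
      have c4 : t⁻¹ * (i - t⁻¹ * s ^ 2) = 1 ↔ t⁻¹ = i := by
        rw [inv_mul_eq_one₀ ht]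
        constructor
        · intro h
          have hi : i = t + t⁻¹ * s ^ 2 := by linear_combination -h
          rw [hi]
          field_simp
          linear_combination -hst
        · intro h
          rw [← h]
          field_simp
          linear_combination hst
      simp only [c1, c2, c3, c4, if_true]
      have n01 : ¬((0 : ZMod d) = t) := fun h => ht0 (by rw [← h]; ring)
      have n02 : ¬((0 : ZMod d) = t⁻¹ * s ^ 2) := fun h => hs0 (by
        have := mul_eq_zero.mp h.symm
        rcases this with h' | h'
        · exact absurd h' hti
        · exact h')
      have n03 : ¬((0 : ZMod d) = t⁻¹) := fun h => hti h.symm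
      have n12 : ¬(t = t⁻¹ * s ^ 2) := fun h => hne (by field_simp at h; linear_combination -h)
      have n13 : ¬(t = t⁻¹) := fun h => ht1 (by field_simp at h; linear_combination h)
      have n23 : ¬(t⁻¹ * s ^ 2 = t⁻¹) := fun h => hs1 (by
        have : t⁻¹ * s ^ 2 = t⁻¹ * 1 := by rw [h, mul_one]
        exact mul_left_cancel₀ hti this)
      simp only [dup_ite]
      clear key hcan a1 a2 c1 c2 c3 c4
      by_cases h1 : (0 : ZMod d) = i
      · have k2 : ¬(t = i) := fun h => n01 (h1.trans h.symm)
        have k3 : ¬(t⁻¹ * s ^ 2 = i) := fun h => n02 (h1.trans h.symm)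
        have k4 : ¬(t⁻¹ = i) := fun h => n03 (h1.trans h.symm)
        rw [if_pos (Or.inl h1), if_neg (not_or.mpr ⟨k3, k4⟩), if_pos h1, if_neg k2, if_neg k3,
          if_neg k4]
        norm_num
      · by_cases h2 : t = i
        · have k3 : ¬(t⁻¹ * s ^ 2 = i) := fun h => n12 (h2.trans h.symm)
          have k4 : ¬(t⁻¹ = i) := fun h => n13 (h2.trans h.symm)
          rw [if_pos (Or.inr h2), if_neg (not_or.mpr ⟨k3, k4⟩), if_neg h1, if_pos h2, if_neg k3,
            if_neg k4]
          norm_num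
        · by_cases h3 : t⁻¹ * s ^ 2 = i
          · have k4 : ¬(t⁻¹ = i) := fun h => n23 (h3.trans h.symm)
            rw [if_neg (not_or.mpr ⟨h1, h2⟩), if_pos (Or.inl h3), if_neg h1, if_neg h2,
              if_pos h3, if_neg k4]
            norm_num
          · by_cases h4 : t⁻¹ = i
            · rw [if_neg (not_or.mpr ⟨h1, h2⟩), if_pos (Or.inr h4), if_neg h1, if_neg h2,
                if_neg h3, if_pos h4]
              norm_num
            · rw [if_neg (not_or.mpr ⟨h1, h2⟩), if_neg (not_or.mpr ⟨h3, h4⟩), if_neg h1,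
                if_neg h2, if_neg h3, if_neg h4]
              norm_num
    · simp only [hcan, if_neg hij]
      have z : ∀ (A : ZMod d) (a : ℂ), (if A = i then if A = j then a else 0 else 0) = 0 := by
        intro A a
        split_ifs with p q
        · exact absurd (p.symm.trans q) hij
        · rfl
        · rfl
      rw [z, z, z, z]
      norm_num
  · ext i j
    simp only [chanC, ptrA, Matrix.of_apply, conj_apply' s t hst, Matrix.kroneckerMap_apply,
      rhoIn, ketbra, Matrix.smul_apply,
      Matrix.add_apply, Matrix.single, Matrix.of_apply, smul_eq_mul]
    have key : ∀ c u x : ZMod d, (c = s*x - t*u) ↔ (x = s⁻¹*(t*u + c)) := by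
      intro c u x
      rw [eq_inv_mul_iff_mul_eq₀ hs]
      constructor
      · intro h; linear_combination -h
      · intro h; linear_combination -h
    simp only [key, ite_and, mul_ite, ite_mul, zero_mul, mul_zero, one_mul, mul_one, mul_add,
      add_mul, Finset.sum_add_distrib, Finset.sum_ite_eq', Finset.mem_univ, if_true]
    have hcan : ∀ c : ZMod d, s⁻¹ * (t * i + c) = s⁻¹ * (t * j + c) ↔ i = j := by
      intro c
      constructor
      · intro h
        have h2' := mul_left_cancel₀ hsi h
        have h3 : t * i = t * j := by linear_combination h2'
        exact mul_left_cancel₀ ht h3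
      · rintro rfl; rfl
    have hcan' : ∀ c : ZMod d, s⁻¹ * (t * i) + c = s⁻¹ * (t * j) + c ↔ i = j := by
      intro c
      rw [add_right_cancel_iff]
      constructor
      · intro h
        exact mul_left_cancel₀ ht (mul_left_cancel₀ hsi h)
      · rintro rfl; rfl
    by_cases hij : i = j
    · subst hij
      simp only [eq_self_iff_true, if_true]
      have hss : s * s⁻¹ = 1 := mul_inv_cancel₀ hs
      have htt : t * t⁻¹ = 1 := mul_inv_cancel₀ ht
      have a1 : t * (s⁻¹ * (t * i)) + 0 + s * i = s⁻¹ * i := by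
        linear_combination s⁻¹ * i * hst - s * i * hss
      have a2 : t * (s⁻¹ * (t * i)) + t * (s⁻¹ * (t⁻¹ * s)) + s * i = s⁻¹ * (i + s) := by
        linear_combination s⁻¹ * i * hst - s * i * hss + s⁻¹ * s * htt
      rw [a1, a2, sigma01_diag, sigma01_diag]
      have c1 : s⁻¹ * i = 0 ↔ 0 = i := by
        constructor
        · intro h
          rcases mul_eq_zero.mp h with h' | h'
          · exact absurd h' hsi
          · exact h'.symm
        · rintro rfl; simp
      have c2 : s⁻¹ * i = 1 ↔ s = i := inv_mul_eq_one₀ hs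
      have c3 : s⁻¹ * (i + s) = 0 ↔ -s = i := by
        constructor
        · intro h
          rcases mul_eq_zero.mp h with h' | h'
          · exact absurd h' hsi
          · linear_combination -h'
        · intro h
          rw [← h]
          simp
      have c4 : s⁻¹ * (i + s) = 1 ↔ 0 = i := by
        rw [inv_mul_eq_one₀ hs]
        constructor
        · intro h; linear_combination h
        · intro h; linear_combination h
      simp only [c1, c2, c3, c4, if_true]
      have m01 : ¬((0 : ZMod d) = s) := fun h => hs h.symm
      have m02 : ¬((0 : ZMod d) = -s) := fun h => hs (by linear_combination h)
      have m12 : ¬(s = -s) := by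
        intro h
        have h2s : 2 * s = 0 := by linear_combination h
        rcases mul_eq_zero.mp h2s with h' | h'
        · exact h2 h'
        · exact hs h'
      simp only [dup_ite]
      by_cases g1 : (0 : ZMod d) = i
      · have k2 : ¬(s = i) := fun h => m01 (g1.trans h.symm)
        have k3 : ¬(-s = i) := fun h => m02 (g1.trans h.symm)
        rw [if_pos (Or.inl g1), if_pos (Or.inr g1), if_pos g1, if_neg k3, if_neg k2]
        norm_num
      · by_cases g2 : s = i
        · have k3 : ¬(-s = i) := fun h => m12 (g2.trans h.symm)
          rw [if_pos (Or.inr g2), if_neg (not_or.mpr ⟨k3, g1⟩), if_neg g1, if_neg k3, if_pos g2]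
          norm_num
        · by_cases g3 : -s = i
          · rw [if_neg (not_or.mpr ⟨g1, g2⟩), if_pos (Or.inl g3), if_neg g1, if_pos g3, if_neg g2]
            norm_num
          · rw [if_neg (not_or.mpr ⟨g1, g2⟩), if_neg (not_or.mpr ⟨g3, g1⟩), if_neg g1, if_neg g3,
              if_neg g2]
            norm_num
    · simp only [hcan', if_neg hij]
      have z : ∀ (A : ZMod d) (a : ℂ), (if A = i then if A = j then a else 0 else 0) = 0 := by
        intro A a
        split_ifs with p q
        · exact absurd (p.symm.trans q) hij
        · rfl
        · rfl
      rw [z, z, z]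
      norm_num
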